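/- Let Σ₁ be a compatible signed graph on m vertices with signed distance matrix eigenvalues λ₁ ≥ … ≥ λ_m, and let Σ₂ be the single positive edge K₂⁺. Then the signed distance matrix of the lexicographic product Σ₁[Σ₂] has eigenvalues 2λ_i + 1 for 1 ≤ i ≤ m, together with −1 of multiplicity m. -/

import Mathlib

/-!
Order the vertices of `Σ₁[K₂⁺]` fibre by fibre. Two vertices in different fibres are at the
distance of their projections, realised by lifting a shortest path of `Σ₁`, so they carry the
entry of `D = D(Σ₁)`; the two vertices of a fibre are joined by a positive edge. Hence the signed
distance matrix is the block matrix `[[D, D + I], [D + I, D]]`. Conjugating by `[[I, 0], [I, I]]`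
makes it block triangular with diagonal blocks `-I` and `2D + I`, and the characteristic polynomial
of `2D + I` comes from that of `D` by the substitution `X ↦ 2X + 1`.
-/

open SimpleGraph

/-- The sign of a walk: the product of the signs of its edges. -/
def walkSign {V : Type*} {G : SimpleGraph V} (σ : V → V → ℤ) :
    {u v : V} → G.Walk u v → ℤ
  | _, _, SimpleGraph.Walk.nil => 1
  | _, _, @SimpleGraph.Walk.cons _ _ a b _ _ p => σ a b * walkSign σ p

/-- A walk is a shortest path if its length equals the distance of its endpoints. -/
def IsShortest {V : Type*} {G : SimpleGraph V} {u v : V} (p : G.Walk u v) : Prop :=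
  p.length = G.dist u v

/-- A signed graph is compatible if all shortest paths between any two vertices have
the same sign. -/
def Compatible {V : Type*} (G : SimpleGraph V) (σ : V → V → ℤ) : Prop :=
  ∀ (u v : V) (p q : G.Walk u v), IsShortest p → IsShortest q →
    walkSign σ p = walkSign σ q

/-- The lexicographic product of two graphs: `(a,b) ~ (c,d)` iff `a ~ c`,
or `a = c` and `b ~ d`. -/
def lexProd {V₁ V₂ : Type*} (G₁ : SimpleGraph V₁) (G₂ : SimpleGraph V₂) :
    SimpleGraph (V₁ × V₂) where
  Adj x y := G₁.Adj x.1 y.1 ∨ (x.1 = y.1 ∧ G₂.Adj x.2 y.2)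
  symm := by
    constructor
    rintro x y (h | ⟨h, h2⟩)
    · exact Or.inl h.symm
    · exact Or.inr ⟨h.symm, h2.symm⟩
  loopless := by
    constructor
    rintro x (h | ⟨_, h2⟩)
    · exact G₁.loopless.irrefl _ h
    · exact G₂.loopless.irrefl _ h2

/-- The signature of the lexicographic product of signed graphs. -/
def lexSign {V₁ V₂ : Type*} [DecidableEq V₁] (σ₁ : V₁ → V₁ → ℤ) (σ₂ : V₂ → V₂ → ℤ) :
    V₁ × V₂ → V₁ × V₂ → ℤ :=
  fun x y => if x.1 = y.1 then σ₂ x.2 y.2 else σ₁ x.1 y.1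


open Polynomial

namespace Matrix

variable {n R : Type*} [Fintype n] [DecidableEq n] [CommRing R]

theorem charpoly_fromBlocks_self (A B : Matrix n n R) :
    (fromBlocks A B B A).charpoly = (A - B).charpoly * (A + B).charpoly := by
  let L : Matrix (n ⊕ n) (n ⊕ n) R := fromBlocks 1 0 1 1
  let L' : Matrix (n ⊕ n) (n ⊕ n) R := fromBlocks 1 0 (-1) 1
  have hL : L' * L = 1 := by simp [L, L', fromBlocks_multiply, ← fromBlocks_one]
  have hconj : L * fromBlocks A B B A * L' = fromBlocks (A - B) B 0 (A + B) := by
    simp only [L, L', fromBlocks_multiply, Matrix.one_mul, Matrix.zero_mul, Matrix.mul_one,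
      Matrix.mul_neg, Matrix.mul_zero, add_zero, zero_add]
    congr 1 <;> abel
  rw [← charpoly_fromBlocks_zero₂₁, ← hconj, charpoly_mul_comm, ← mul_assoc, hL, one_mul]

def finTwoBlockCirculant (A B : Matrix n n R) : Matrix (n × Fin 2) (n × Fin 2) R :=
  of fun x y => if x.2 = y.2 then A x.1 y.1 else B x.1 y.1

theorem charpoly_finTwoBlockCirculant (A B : Matrix n n R) :
    (finTwoBlockCirculant A B).charpoly = (A - B).charpoly * (A + B).charpoly := by
  let e : n × Fin 2 ≃ n ⊕ n :=
    (Equiv.prodComm n (Fin 2)).trans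
      ((finTwoEquiv.prodCongr (Equiv.refl n)).trans (Equiv.boolProdEquivSum n))
  have hblocks : reindex e e (finTwoBlockCirculant A B) = fromBlocks A B B A := by
    ext (a | a) (b | b) <;> simp [e, finTwoBlockCirculant]
  rw [← charpoly_reindex e, hblocks, charpoly_fromBlocks_self]

theorem charpoly_smul_add_scalar_comp (M : Matrix n n R) (c d : R) :
    (c • M + scalar n d).charpoly.comp (C c * X + C d) = C c ^ Fintype.card n * M.charpoly := by
  have hmap : (c • M + scalar n d).charmatrix.map (compRingHom (C c * X + C d)) =
      C c • M.charmatrix := by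
    ext i j : 1
    by_cases hij : i = j
    · subst hij
      simp only [map_apply, charmatrix_apply_eq, smul_apply, add_apply, scalar_apply,
        diagonal_apply_eq, coe_compRingHom_apply, sub_comp, X_comp, C_comp, smul_eq_mul]
      rw [map_add, map_mul]
      ring
    · simp [hij]
  rw [charpoly, ← coe_compRingHom_apply, RingHom.map_det, RingHom.mapMatrix_apply, hmap,
    det_smul, charpoly]

theorem charpoly_smul_add_scalar_of_charpoly_eq_prod {m : ℕ} (hcard : Fintype.card n = m)
    (M : Matrix n n R) (μ : Fin m → R) (hM : M.charpoly = ∏ i, (X - C (μ i)))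
    (c d : R) [Invertible c] :
    (c • M + scalar n d).charpoly = ∏ i, (X - C (c * μ i + d)) := by
  apply (algEquivCMulXAddC c d).injective
  have hlin (x : R) : (X - C (c * x + d)).comp (C c * X + C d) = C c * (X - C x) := by
    rw [sub_comp, X_comp, C_comp, map_add, map_mul]
    ring
  simp only [algEquivCMulXAddC_apply, ← comp_eq_aeval, charpoly_smul_add_scalar_comp, hM,
    prod_comp, hlin, Finset.prod_mul_distrib, Finset.prod_const, Finset.card_univ,
    Fintype.card_fin, hcard]

theorem charpoly_neg_one : (-1 : Matrix n n R).charpoly = (X + 1) ^ Fintype.card n := by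
  rw [← diagonal_one, diagonal_neg, charpoly_diagonal]
  simp

end Matrix

namespace SimpleGraph

variable {V₁ V₂ : Type*} {G₁ : SimpleGraph V₁} {G₂ : SimpleGraph V₂}

@[simp]
theorem walkSign_nil {V : Type*} {G : SimpleGraph V} (σ : V → V → ℤ) {u : V} :
    walkSign σ (Walk.nil : G.Walk u u) = 1 := rfl

@[simp]
theorem walkSign_cons {V : Type*} {G : SimpleGraph V} (σ : V → V → ℤ) {u v w : V}
    (h : G.Adj u v) (p : G.Walk v w) : walkSign σ (Walk.cons h p) = σ u v * walkSign σ p := rfl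

@[simp]
theorem walkSign_copy {V : Type*} {G : SimpleGraph V} (σ : V → V → ℤ) {u v u' v' : V}
    (p : G.Walk u v) (hu : u = u') (hv : v = v') : walkSign σ (p.copy hu hv) = walkSign σ p := by
  subst hu hv
  rfl

theorem lexProd_adj_of_adj_fst {a c : V₁} (h : G₁.Adj a c) (i j : V₂) :
    (lexProd G₁ G₂).Adj (a, i) (c, j) :=
  Or.inl h

def lexProdLeft (j : V₂) : G₁ →g lexProd G₁ G₂ where
  toFun a := (a, j)
  map_rel' h := lexProd_adj_of_adj_fst h j j

@[simp]
theorem lexProdLeft_apply (j : V₂) (a : V₁) : lexProdLeft (G₁ := G₁) (G₂ := G₂) j a = (a, j) :=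
  rfl

theorem walkSign_map_lexProdLeft [DecidableEq V₁] (σ₁ : V₁ → V₁ → ℤ) (σ₂ : V₂ → V₂ → ℤ)
    (j : V₂) {a b : V₁} (p : G₁.Walk a b) :
    walkSign (lexSign σ₁ σ₂) (p.map (lexProdLeft (G₂ := G₂) j)) = walkSign σ₁ p := by
  induction p with
  | nil => rfl
  | cons h p ih =>
    rw [Walk.map_cons, walkSign_cons, walkSign_cons, ih]
    simp [lexSign, h.ne]

theorem exists_walk_fst_length_le {x y : V₁ × V₂} (P : (lexProd G₁ G₂).Walk x y) :
    ∃ p : G₁.Walk x.1 y.1, p.length ≤ P.length := by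
  induction P with
  | nil => exact ⟨.nil, le_rfl⟩
  | cons h P ih =>
    obtain ⟨p, hp⟩ := ih
    rw [Walk.length_cons]
    rcases h with h | ⟨h, -⟩
    · exact ⟨.cons h p, by rw [Walk.length_cons]; omega⟩
    · exact ⟨p.copy h.symm rfl, by rw [Walk.length_copy]; omega⟩

theorem dist_fst_le_dist_lexProd {x y : V₁ × V₂} (h : (lexProd G₁ G₂).Reachable x y) :
    G₁.dist x.1 y.1 ≤ (lexProd G₁ G₂).dist x y := by
  obtain ⟨P, hP⟩ := h.exists_walk_length_eq_dist
  obtain ⟨p, hp⟩ := exists_walk_fst_length_le P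
  exact (dist_le p).trans (hp.trans hP.le)

/-- The walk `cons h q` lifted to the lexicographic product, leaving the fibre of `i` for the
fibre of `j` on its first edge. -/
def lexProdLift {a b c : V₁} (h : G₁.Adj a c) (q : G₁.Walk c b) (i j : V₂) :
    (lexProd G₁ G₂).Walk (a, i) (b, j) :=
  .cons (lexProd_adj_of_adj_fst h i j)
    ((q.map (lexProdLeft j)).copy (lexProdLeft_apply j c) (lexProdLeft_apply j b))

theorem length_lexProdLift {a b c : V₁} (h : G₁.Adj a c) (q : G₁.Walk c b) (i j : V₂) :
    (lexProdLift (G₂ := G₂) h q i j).length = (Walk.cons h q).length := by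
  rw [lexProdLift, Walk.length_cons, Walk.length_copy, Walk.length_map, Walk.length_cons]

theorem walkSign_lexProdLift [DecidableEq V₁] (σ₁ : V₁ → V₁ → ℤ) (σ₂ : V₂ → V₂ → ℤ)
    {a b c : V₁} (h : G₁.Adj a c) (q : G₁.Walk c b) (i j : V₂) :
    walkSign (lexSign σ₁ σ₂) (lexProdLift (G₂ := G₂) h q i j) = walkSign σ₁ (Walk.cons h q) := by
  rw [lexProdLift, walkSign_cons, walkSign_copy, walkSign_map_lexProdLeft, walkSign_cons]
  simp [lexSign, h.ne]

theorem IsShortest.lexProdLift {a b c : V₁} {h : G₁.Adj a c} {q : G₁.Walk c b}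
    (hq : IsShortest (Walk.cons h q)) (i j : V₂) :
    IsShortest (SimpleGraph.lexProdLift (G₂ := G₂) h q i j) := by
  let P := SimpleGraph.lexProdLift (G₂ := G₂) h q i j
  have hlen : P.length = G₁.dist a b := (length_lexProdLift h q i j).trans hq
  refine le_antisymm ?_ (dist_le P)
  rw [hlen]
  exact dist_fst_le_dist_lexProd ⟨P⟩

end SimpleGraph

noncomputable def signedDistMatrix {V : Type*} (G : SimpleGraph V) (s : V → V → ℤ) :
    Matrix V V ℝ :=
  Matrix.of fun u v => (s u v : ℝ) * (G.dist u v : ℝ)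

def IsShortestPathSign {V : Type*} (G : SimpleGraph V) (σ s : V → V → ℤ) : Prop :=
  ∀ (u v : V) (p : G.Walk u v), IsShortest p → walkSign σ p = s u v

theorem signedDistMatrix_apply_self {V : Type*} (G : SimpleGraph V) (s : V → V → ℤ) (u : V) :
    signedDistMatrix G s u u = 0 := by
  simp [signedDistMatrix]

section LexProd

variable {V₁ V₂ : Type*} [DecidableEq V₁] {G₁ : SimpleGraph V₁} {G₂ : SimpleGraph V₂}
  {σ₁ s₁ : V₁ → V₁ → ℤ} {σ₂ : V₂ → V₂ → ℤ} {sL : V₁ × V₂ → V₁ × V₂ → ℤ}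

theorem lexProd_signedDistMatrix_apply_of_ne (h₁ : G₁.Connected)
    (hs₁ : IsShortestPathSign G₁ σ₁ s₁)
    (hsL : IsShortestPathSign (lexProd G₁ G₂) (lexSign σ₁ σ₂) sL) {a b : V₁} (hab : a ≠ b)
    (i j : V₂) :
    signedDistMatrix (lexProd G₁ G₂) sL (a, i) (b, j) = signedDistMatrix G₁ s₁ a b := by
  obtain ⟨p, hp⟩ := h₁.exists_walk_length_eq_dist a b
  cases p with
  | nil => exact absurd rfl hab
  | cons h q =>
    have hP : IsShortest (lexProdLift (G₂ := G₂) h q i j) := IsShortest.lexProdLift hp i j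
    have hsign : sL (a, i) (b, j) = s₁ a b := by
      rw [← hsL _ _ _ hP, walkSign_lexProdLift, hs₁ _ _ _ hp]
    have hdist : (lexProd G₁ G₂).dist (a, i) (b, j) = G₁.dist a b := by
      rw [← hP, length_lexProdLift, hp]
    simp only [signedDistMatrix, Matrix.of_apply, hsign, hdist]

theorem lexProd_signedDistMatrix_apply_of_adj
    (hsL : IsShortestPathSign (lexProd G₁ G₂) (lexSign σ₁ σ₂) sL) (a : V₁) {i j : V₂}
    (hij : G₂.Adj i j) : signedDistMatrix (lexProd G₁ G₂) sL (a, i) (a, j) = σ₂ i j := by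
  have hadj : (lexProd G₁ G₂).Adj (a, i) (a, j) := Or.inr ⟨rfl, hij⟩
  have hdist : (lexProd G₁ G₂).dist (a, i) (a, j) = 1 := dist_eq_one_iff_adj.mpr hadj
  have hsign : sL (a, i) (a, j) = σ₂ i j := by
    rw [← hsL _ _ hadj.toWalk hdist.symm]
    simp [lexSign]
  simp [signedDistMatrix, hsign, hdist]

-- In the paper's notation, `D(Σ₁[K₂⁺]) = D(Σ₁) ⊗ J₂ + I_m ⊗ D(K₂⁺)`.
theorem signedDistMatrix_lexProd_top_fin_two {σ₂ : Fin 2 → Fin 2 → ℤ}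
    {sL : V₁ × Fin 2 → V₁ × Fin 2 → ℤ} (h₁ : G₁.Connected) (hs₁ : IsShortestPathSign G₁ σ₁ s₁)
    (hσ₂ : ∀ i j, σ₂ i j = 1) (hsL : IsShortestPathSign (lexProd G₁ ⊤) (lexSign σ₁ σ₂) sL) :
    signedDistMatrix (lexProd G₁ ⊤) sL =
      Matrix.finTwoBlockCirculant (signedDistMatrix G₁ s₁) (signedDistMatrix G₁ s₁ + 1) := by
  ext ⟨a, i⟩ ⟨b, j⟩
  rcases eq_or_ne a b with rfl | hab
  · rcases eq_or_ne i j with rfl | hij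
    · simp [Matrix.finTwoBlockCirculant, signedDistMatrix_apply_self]
    · rw [lexProd_signedDistMatrix_apply_of_adj hsL a ((top_adj i j).mpr hij)]
      simp [Matrix.finTwoBlockCirculant, hij, hσ₂, signedDistMatrix_apply_self]
  · rw [lexProd_signedDistMatrix_apply_of_ne h₁ hs₁ hsL hab]
    simp [Matrix.finTwoBlockCirculant, hab]

end LexProd

theorem lexProd_K2pos_distance_spectrum_general {V₁ : Type*} [Fintype V₁] [DecidableEq V₁]
    {m : ℕ} (hcard : Fintype.card V₁ = m)
    (G₁ : SimpleGraph V₁) (h₁ : G₁.Connected)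
    (σ₁ : V₁ → V₁ → ℤ)
    -- `Σ₁` is compatible with common shortest-path signs `s₁`:
    (s₁ : V₁ → V₁ → ℤ)
    (hs₁ : ∀ (u v : V₁) (p : G₁.Walk u v), IsShortest p → walkSign σ₁ p = s₁ u v)
    -- the eigenvalues `λ₁ ≥ … ≥ λ_m` of the signed distance matrix of `Σ₁`:
    (lam : Fin m → ℝ)
    (hchar : (Matrix.of fun u v : V₁ => (s₁ u v : ℝ) * (G₁.dist u v : ℝ)).charpoly =
      ∏ i : Fin m, (X - C (lam i)))
    -- `Σ₂ = K₂⁺`, a single positive edge: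
    (σ₂ : Fin 2 → Fin 2 → ℤ) (hσ₂ : ∀ u v : Fin 2, σ₂ u v = 1)
    -- the lexicographic product is compatible, with common shortest-path sign `sL`:
    (sL : V₁ × Fin 2 → V₁ × Fin 2 → ℤ)
    (hsL : ∀ (x y : V₁ × Fin 2)
      (P : (lexProd G₁ (⊤ : SimpleGraph (Fin 2))).Walk x y), IsShortest P →
        walkSign (lexSign σ₁ σ₂) P = sL x y) :
    (Matrix.of fun x y : V₁ × Fin 2 =>
        (sL x y : ℝ) * ((lexProd G₁ (⊤ : SimpleGraph (Fin 2))).dist x y : ℝ)).charpoly =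
      (∏ i : Fin m, (X - C (2 * lam i + 1))) * (X + 1) ^ m := by
  set D := signedDistMatrix G₁ s₁
  have hdiff : D - (D + 1) = -1 := by abel
  have hsum : D + (D + 1) = (2 : ℝ) • D + Matrix.scalar V₁ 1 := by
    rw [map_one, two_smul, add_assoc]
  change (signedDistMatrix _ sL).charpoly = _
  rw [signedDistMatrix_lexProd_top_fin_two h₁ hs₁ hσ₂ hsL, Matrix.charpoly_finTwoBlockCirculant,
    hdiff, hsum, Matrix.charpoly_neg_one, hcard,
    Matrix.charpoly_smul_add_scalar_of_charpoly_eq_prod hcard D lam hchar, mul_comm]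

/-- Signed distance spectrum of the lexicographic product `Σ₁[K₂⁺]`:
if `Σ₁` is a compatible signed graph on `m` vertices whose signed distance matrix has
eigenvalues `λ₁ ≥ … ≥ λ_m`, then `D(Σ₁[K₂⁺])` has eigenvalues `2λᵢ + 1` (for each `i`)
together with `−1` of multiplicity `m` (stated via the characteristic polynomial). -/
theorem lexProd_K2pos_distance_spectrum {V₁ : Type*} [Fintype V₁] [DecidableEq V₁]
    {m : ℕ} (hcard : Fintype.card V₁ = m)
    (G₁ : SimpleGraph V₁) (h₁ : G₁.Connected)
    (σ₁ : V₁ → V₁ → ℤ)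
    (hσ₁ : ∀ u v : V₁, G₁.Adj u v → σ₁ u v = 1 ∨ σ₁ u v = -1)
    (hsymm₁ : ∀ u v : V₁, σ₁ u v = σ₁ v u)
    -- `Σ₁` is compatible with common shortest-path signs `s₁`:
    (s₁ : V₁ → V₁ → ℤ)
    (hs₁ : ∀ (u v : V₁) (p : G₁.Walk u v), IsShortest p → walkSign σ₁ p = s₁ u v)
    -- the eigenvalues `λ₁ ≥ … ≥ λ_m` of the signed distance matrix of `Σ₁`:
    (lam : Fin m → ℝ) (hord : ∀ i j : Fin m, i ≤ j → lam j ≤ lam i)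
    (hchar : (Matrix.of fun u v : V₁ => (s₁ u v : ℝ) * (G₁.dist u v : ℝ)).charpoly =
      ∏ i : Fin m, (X - C (lam i)))
    -- `Σ₂ = K₂⁺`, a single positive edge:
    (σ₂ : Fin 2 → Fin 2 → ℤ) (hσ₂ : ∀ u v : Fin 2, σ₂ u v = 1)
    -- the lexicographic product is compatible, with common shortest-path sign `sL`:
    (sL : V₁ × Fin 2 → V₁ × Fin 2 → ℤ)
    (hsL : ∀ (x y : V₁ × Fin 2)
      (P : (lexProd G₁ (⊤ : SimpleGraph (Fin 2))).Walk x y), IsShortest P →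
        walkSign (lexSign σ₁ σ₂) P = sL x y) :
    (Matrix.of fun x y : V₁ × Fin 2 =>
        (sL x y : ℝ) * ((lexProd G₁ (⊤ : SimpleGraph (Fin 2))).dist x y : ℝ)).charpoly =
      (∏ i : Fin m, (X - C (2 * lam i + 1))) * (X + 1) ^ m :=
  lexProd_K2pos_distance_spectrum_general hcard G₁ h₁ σ₁ s₁ hs₁ lam hchar σ₂ hσ₂ sL hsL
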